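/- Let N ≥ 2 be an integer, 0 < α1 < α2 < p < N, and 0 < c < 1. Let V : [0,∞) → [0,∞) be a C¹ strictly increasing bijection with V(0) = 0 and inverse V^{(-1)}, satisfying ∫_0^k V^{(-1)}(t)^{-p} dt ≤ c^{-1}·k·V^{(-1)}(k)^{-p} for all k > 0 and V'(R) ≤ N·V(R)/R for all R > 0. Let ρ : [0,∞) → (0,∞) be continuous and nonincreasing such that s ↦ ρ(s)·s^{α1} is nonincreasing on (1,∞) and s ↦ ρ(s)·s^{α2} is nondecreasing on (1,∞). Assume vol_ρ(R) = ρ(R)·V(R) is a strictly increasing bijection of [0,∞) onto itself with inverse R_ρ, and that there exist constants C1 > C0 > 0 with C0·s^{1/N} ≤ R_ρ(s) ≤ C1·s^{1/N} whenever R_ρ(s) ≤ 1. Define W(r) = ρ(R_ρ(r))·R_ρ(r)^p·r^{−(p−α2)/(N−α1)} for r > 0, and set d = (p−α1)/(p−α2) − (p−α2)/(N−α1). Then d > 0 and there exists a constant γ1 > 0 such that W(λ·r) ≤ γ1·λ^d·W(r) for all λ ≥ 1 and r > 0. -/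

import Mathlib

/-!
Write `f r = ρ (Rρ r) * Rρ r ^ p`, so that `W r = f r * r ^ (-e)` with `e = (p-α2)/(N-α1) < 1`.
It suffices to show `f r' ≤ γ (r'/r) ^ β f r` for `r ≤ r'`, where `β = (p-α1)/(p-α2) > 1`.

For radii below `1` this follows from `Rρ s ≍ s ^ (1/N)` and the monotonicity of `ρ`, with the
smaller exponent `p/N`. For radii above `1`, non-parabolicity makes `V R * R ^ (-p)` almost
increasing (the integral is finite because `Rρ s ≳ s ^ (1/N)` forces `V⁻¹ t ≳ t ^ (1/N)` near `0`,
and `p < N`). Together with the monotonicity of `ρ s * s ^ α2` this gives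
`(R'/R) ^ (p-α2) ≲ r'/r`, and the monotonicity of `ρ s * s ^ α1` then gives
`f r' / f r ≤ (R'/R) ^ (p-α1) ≲ (r'/r) ^ β`. The two ranges are joined at `r = ρ 1 * V 1`.
-/

open MeasureTheory Set

theorem StrictMonoOn.monotoneOn_of_rightInvOn {α β : Type*} [LinearOrder α] [Preorder β]
    {g : α → β} {h : β → α} {s : Set α} {t : Set β} (hg : StrictMonoOn g s)
    (hh : MapsTo h t s) (hinv : RightInvOn h g t) : MonotoneOn h t :=
  fun y hy z hz hyz => (hg.le_iff_le (hh hy) (hh hz)).1 (by rwa [hinv hy, hinv hz])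

section ExtendToEndpoint

variable {α β : Type*} [LinearOrder α] [TopologicalSpace α] [OrderTopology α] [DenselyOrdered α]
  [NoMaxOrder α] [LinearOrder β] [TopologicalSpace β] [OrderClosedTopology β] {f : α → β} {a : α}

theorem MonotoneOn.Ici_of_continuousWithinAt (hf : MonotoneOn f (Ioi a))
    (ha : ContinuousWithinAt f (Ioi a) a) : MonotoneOn f (Ici a) :=
  Ioi_insert (a := a) ▸ hf.insert_of_continuousWithinAt (nhdsGT_neBot a) ha

theorem AntitoneOn.Ici_of_continuousWithinAt (hf : AntitoneOn f (Ioi a))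
    (ha : ContinuousWithinAt f (Ioi a) a) : AntitoneOn f (Ici a) :=
  MonotoneOn.Ici_of_continuousWithinAt (β := βᵒᵈ) hf ha

end ExtendToEndpoint

theorem continuousWithinAt_mul_rpow_Ioi_one {ρ : ℝ → ℝ} (hρ : ContinuousOn ρ (Ici 0)) (α : ℝ) :
    ContinuousWithinAt (fun s => ρ s * s ^ α) (Ioi 1) 1 :=
  ((hρ 1 (mem_Ici.2 zero_le_one)).mono (Ioi_subset_Ici zero_le_one)).mul
    (Real.continuousAt_rpow_const 1 α (Or.inl one_ne_zero)).continuousWithinAt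

theorem mul_le_intervalIntegral_of_antitoneOn {f : ℝ → ℝ} {k k' : ℝ} (hk : 0 < k)
    (hkk' : k ≤ k') (hf : AntitoneOn f (Ioc 0 k')) (hf0 : ∀ t ∈ Ioc 0 k', 0 ≤ f t)
    (hint : IntervalIntegrable f volume 0 k') : k * f k ≤ ∫ t in 0..k', f t :=
  calc k * f k = ∫ _ in 0..k, f k := by simp
    _ ≤ ∫ t in 0..k, f t :=
      intervalIntegral.integral_mono_on_of_le_Ioo hk.le intervalIntegrable_const
        (hint.mono_set <| by
          rw [uIcc_of_le hk.le, uIcc_of_le (hk.le.trans hkk')]; exact Icc_subset_Icc_right hkk')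
        fun t ht => hf ⟨ht.1, ht.2.le.trans hkk'⟩ ⟨hk, hkk'⟩ ht.2.le
    _ ≤ ∫ t in 0..k', f t := by
      refine intervalIntegral.integral_mono_interval le_rfl hk.le hkk' ?_ hint
      filter_upwards [ae_restrict_mem measurableSet_Ioc] with t ht using hf0 t ht

theorem mul_rpow_neg_le_of_integral_le {g : ℝ → ℝ} {c p k k' : ℝ} (hc : 0 < c) (hp : 0 ≤ p)
    (hg : MonotoneOn g (Ioi 0)) (hg0 : ∀ t ∈ Ioi 0, 0 < g t)
    (hint : IntervalIntegrable (fun t => g t ^ (-p)) volume 0 k') (hk : 0 < k) (hkk' : k ≤ k')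
    (hbound : ∫ t in 0..k', g t ^ (-p) ≤ c⁻¹ * k' * g k' ^ (-p)) :
    c * (k * g k ^ (-p)) ≤ k' * g k' ^ (-p) := by
  have hanti : AntitoneOn (fun t => g t ^ (-p)) (Ioc 0 k') := fun s hs t ht hst =>
    Real.rpow_le_rpow_of_nonpos (hg0 s hs.1) (hg hs.1 ht.1 hst) (neg_nonpos.2 hp)
  have hlow := mul_le_intervalIntegral_of_antitoneOn hk hkk' hanti
    (fun t ht => (Real.rpow_pos_of_pos (hg0 t ht.1) _).le) hint
  calc c * (k * g k ^ (-p)) ≤ c * (c⁻¹ * k' * g k' ^ (-p)) :=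
        mul_le_mul_of_nonneg_left (hlow.trans hbound) hc.le
    _ = k' * g k' ^ (-p) := by field_simp

theorem pos_of_mul_rpow_le {g : ℝ → ℝ} {C a t₀ : ℝ} (hg : MonotoneOn g (Ioi 0)) (hC : 0 < C)
    (ht₀ : 0 < t₀) (hlow : ∀ t ∈ Ioc 0 t₀, C * t ^ a ≤ g t) : ∀ t ∈ Ioi 0, 0 < g t := by
  intro t ht
  have hmin : 0 < min t t₀ := lt_min ht ht₀
  calc 0 < C * min t t₀ ^ a := by positivity
    _ ≤ g (min t t₀) := hlow _ ⟨hmin, min_le_right t t₀⟩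
    _ ≤ g t := hg hmin ht (min_le_left t t₀)

theorem intervalIntegrable_rpow_neg_of_mul_rpow_le {g : ℝ → ℝ} {C a p t₀ k : ℝ}
    (hg : MonotoneOn g (Ioi 0)) (hg0 : ∀ t ∈ Ioi 0, 0 < g t) (hC : 0 < C) (ht₀ : 0 < t₀)
    (hp : 0 ≤ p) (hap : a * p < 1) (hlow : ∀ t ∈ Ioc 0 t₀, C * t ^ a ≤ g t) (hk : 0 ≤ k) :
    IntervalIntegrable (fun t => g t ^ (-p)) volume 0 k := by
  rw [intervalIntegrable_iff_integrableOn_Ioc_of_le hk]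
  have hanti : AntitoneOn (fun t => g t ^ (-p)) (Ioc 0 k) := fun s hs t ht hst =>
    Real.rpow_le_rpow_of_nonpos (hg0 s hs.1) (hg hs.1 ht.1 hst) (neg_nonpos.2 hp)
  have hdom : IntegrableOn (fun t => C ^ (-p) * t ^ (-(a * p)) + g t₀ ^ (-p)) (Ioc 0 k) :=
    (intervalIntegrable_iff_integrableOn_Ioc_of_le hk).1
      (((intervalIntegral.intervalIntegrable_rpow' (by linarith)).const_mul _).add
        intervalIntegrable_const)
  refine hdom.mono'
    (aemeasurable_restrict_of_antitoneOn measurableSet_Ioc hanti).aestronglyMeasurable ?_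
  filter_upwards [ae_restrict_mem measurableSet_Ioc] with t ht
  replace ht : 0 < t := ht.1
  have hC' : 0 ≤ C ^ (-p) * t ^ (-(a * p)) := by positivity
  have ht₀' : 0 ≤ g t₀ ^ (-p) := (Real.rpow_pos_of_pos (hg0 t₀ ht₀) _).le
  rw [Real.norm_of_nonneg (Real.rpow_pos_of_pos (hg0 t ht) _).le]
  rcases le_total t t₀ with htt₀ | htt₀
  · have : g t ^ (-p) ≤ (C * t ^ a) ^ (-p) :=
      Real.rpow_le_rpow_of_nonpos (by positivity) (hlow t ⟨ht, htt₀⟩) (neg_nonpos.2 hp)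
    rw [Real.mul_rpow hC.le (Real.rpow_nonneg ht.le _), ← Real.rpow_mul ht.le, mul_neg] at this
    linarith
  · have : g t ^ (-p) ≤ g t₀ ^ (-p) :=
      Real.rpow_le_rpow_of_nonpos (hg0 t₀ ht₀) (hg ht₀ ht htt₀) (neg_nonpos.2 hp)
    linarith

theorem mul_rpow_neg_le_of_nonparabolic {V Vinv : ℝ → ℝ} {c p C a t₀ R R' : ℝ} (hc : 0 < c)
    (hp : 0 ≤ p) (hC : 0 < C) (ht₀ : 0 < t₀) (hap : a * p < 1) (hV : MonotoneOn V (Ioi 0))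
    (hV0 : ∀ R ∈ Ioi 0, 0 < V R) (hVinv : MonotoneOn Vinv (Ioi 0))
    (hVinv_left : ∀ R ∈ Ioi 0, Vinv (V R) = R) (hlow : ∀ t ∈ Ioc 0 t₀, C * t ^ a ≤ Vinv t)
    (hphyp : ∀ k, 0 < k → ∫ t in 0..k, Vinv t ^ (-p) ≤ c⁻¹ * k * Vinv k ^ (-p))
    (hR : 0 < R) (hRR' : R ≤ R') : c * (V R * R ^ (-p)) ≤ V R' * R' ^ (-p) := by
  have hR' : 0 < R' := hR.trans_le hRR'
  have hVinv0 := pos_of_mul_rpow_le hVinv hC ht₀ hlow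
  have h := mul_rpow_neg_le_of_integral_le hc hp hVinv hVinv0
    (intervalIntegrable_rpow_neg_of_mul_rpow_le hVinv hVinv0 hC ht₀ hp hap hlow (hV0 R' hR').le)
    (hV0 R hR) (hV hR hR' hRR') (hphyp _ (hV0 R' hR'))
  rwa [hVinv_left R hR, hVinv_left R' hR'] at h

theorem mul_rpow_le_of_radius_lower_bound {ρ V Vinv Rρ : ℝ → ℝ} {C0 ν t : ℝ}
    (hC0 : 0 ≤ C0) (hν : 0 ≤ ν) (hρ : AntitoneOn ρ (Ici 0)) (hρ0 : ∀ s, 0 ≤ s → 0 < ρ s)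
    (hVinv_mono : MonotoneOn Vinv (Ici 0)) (hVinv : ∀ y, 0 ≤ y → 0 ≤ Vinv y ∧ V (Vinv y) = y)
    (hVinv_one : Vinv (V 1) = 1) (hRρ : ∀ R, 0 ≤ R → Rρ (ρ R * V R) = R)
    (hRρ_lower : ∀ s, 0 < s → Rρ s ≤ 1 → C0 * s ^ ν ≤ Rρ s) (ht : 0 < t) (ht1 : t ≤ V 1) :
    C0 * ρ 1 ^ ν * t ^ ν ≤ Vinv t := by
  obtain ⟨hR0, hVR⟩ := hVinv t ht.le
  have hR1 : Vinv t ≤ 1 :=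
    hVinv_one ▸ hVinv_mono (mem_Ici.2 ht.le) (mem_Ici.2 (ht.le.trans ht1)) ht1
  have hRρ' : Rρ (ρ (Vinv t) * t) = Vinv t := by simpa only [hVR] using hRρ _ hR0
  calc C0 * ρ 1 ^ ν * t ^ ν = C0 * (ρ 1 * t) ^ ν := by
        rw [Real.mul_rpow (hρ0 1 zero_le_one).le ht.le, mul_assoc]
    _ ≤ C0 * (ρ (Vinv t) * t) ^ ν := by
        gcongr
        · exact mul_nonneg (hρ0 1 zero_le_one).le ht.le
        · exact hρ (mem_Ici.2 hR0) (mem_Ici.2 zero_le_one) hR1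
    _ ≤ Rρ (ρ (Vinv t) * t) := hRρ_lower _ (mul_pos (hρ0 _ hR0) ht) (hRρ'.le.trans hR1)
    _ = Vinv t := hRρ'

def UpperScalingOn (f : ℝ → ℝ) (C β : ℝ) (s : Set ℝ) : Prop :=
  ∀ ⦃r⦄, r ∈ s → ∀ ⦃r'⦄, r' ∈ s → r ≤ r' → f r' ≤ C * (r' / r) ^ β * f r

namespace UpperScalingOn

variable {f : ℝ → ℝ} {C β : ℝ} {s : Set ℝ}

theorem mul_rpow (h : UpperScalingOn f C β s) (hs : s ⊆ Ioi 0) (q : ℝ) :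
    UpperScalingOn (fun r => f r * r ^ q) C (β + q) s := by
  intro r hr r' hr' hrr'
  have hr0 : 0 < r := hs hr
  have hr'0 : 0 < r' := hs hr'
  calc f r' * r' ^ q ≤ C * (r' / r) ^ β * f r * r' ^ q :=
        mul_le_mul_of_nonneg_right (h hr hr' hrr') (Real.rpow_nonneg hr'0.le q)
    _ = C * (r' / r) ^ (β + q) * (f r * r ^ q) := by
      rw [Real.rpow_add (div_pos hr'0 hr0), Real.div_rpow hr'0.le hr0.le q]
      field_simp

theorem union {A B r₀ : ℝ} (hsmall : UpperScalingOn f A β (Ioc 0 r₀))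
    (hlarge : UpperScalingOn f B β (Ici r₀)) (hA : 1 ≤ A) (hB : 1 ≤ B) (hr₀ : 0 < r₀)
    (hf : ∀ r ∈ Ioi 0, 0 ≤ f r) : UpperScalingOn f (B * A) β (Ioi 0) := by
  intro r hr r' hr' hrr'
  have hr0 : 0 < r := hr
  have hX : 0 ≤ (r' / r) ^ β * f r :=
    mul_nonneg (Real.rpow_nonneg (div_nonneg (le_of_lt hr') hr0.le) β) (hf r hr)
  have hA0 : 0 ≤ A := zero_le_one.trans hA
  have hB0 : 0 ≤ B := zero_le_one.trans hB
  rcases le_total r' r₀ with h' | h'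
  · calc f r' ≤ A * (r' / r) ^ β * f r := hsmall ⟨hr, hrr'.trans h'⟩ ⟨hr', h'⟩ hrr'
      _ ≤ B * A * (r' / r) ^ β * f r := by
        nlinarith [mul_nonneg (sub_nonneg.2 hB) (mul_nonneg hA0 hX)]
  rcases le_total r₀ r with h | h
  · calc f r' ≤ B * (r' / r) ^ β * f r := hlarge h (h.trans hrr') hrr'
      _ ≤ B * A * (r' / r) ^ β * f r := by
        nlinarith [mul_nonneg (sub_nonneg.2 hA) (mul_nonneg hB0 hX)]
  calc f r' ≤ B * (r' / r₀) ^ β * f r₀ := hlarge (le_refl r₀) h' h'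
    _ ≤ B * (r' / r₀) ^ β * (A * (r₀ / r) ^ β * f r) :=
      mul_le_mul_of_nonneg_left (hsmall ⟨hr, h⟩ ⟨hr₀, le_rfl⟩ h)
        (mul_nonneg hB0 (Real.rpow_nonneg (div_nonneg (hr₀.le.trans h') hr₀.le) β))
    _ = B * A * (r' / r) ^ β * f r := by
      rw [show r' / r = r' / r₀ * (r₀ / r) by field_simp,
        Real.mul_rpow (div_nonneg (hr₀.le.trans h') hr₀.le) (div_nonneg hr₀.le hr0.le)]
      ring

end UpperScalingOn

theorem upperScalingOn_Ioc_of_rpow_bounds {ρ Rρ : ℝ → ℝ} {C0 C1 ν p β r₀ : ℝ} (hC0 : 0 < C0)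
    (hp : 0 ≤ p) (hνβ : ν * p ≤ β) (hρ : AntitoneOn ρ (Ici 0)) (hρ0 : ∀ s, 0 ≤ s → 0 < ρ s)
    (hRρ : MonotoneOn Rρ (Ici 0)) (hr₀ : Rρ r₀ ≤ 1)
    (hbounds : ∀ s, 0 < s → Rρ s ≤ 1 → C0 * s ^ ν ≤ Rρ s ∧ Rρ s ≤ C1 * s ^ ν) :
    UpperScalingOn (fun r => ρ (Rρ r) * Rρ r ^ p) ((C1 / C0) ^ p) β (Ioc 0 r₀) := by
  intro r hr r' hr' hrr'
  have hbounds' : ∀ s ∈ Ioc 0 r₀, C0 * s ^ ν ≤ Rρ s ∧ Rρ s ≤ C1 * s ^ ν := fun s hs =>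
    hbounds s hs.1 ((hRρ (mem_Ici.2 hs.1.le) (mem_Ici.2 (hs.1.le.trans hs.2)) hs.2).trans hr₀)
  have hr0 : 0 < r := hr.1
  have hr'0 : 0 < r' := hr'.1
  have hR : 0 < Rρ r := (mul_pos hC0 (Real.rpow_pos_of_pos hr0 ν)).trans_le (hbounds' r hr).1
  have hRR' := hRρ (mem_Ici.2 hr0.le) (mem_Ici.2 hr'0.le) hrr'
  have hR' : 0 < Rρ r' := hR.trans_le hRR'
  have hC1 : 0 < C1 := pos_of_mul_pos_left (hR'.trans_le (hbounds' r' hr').2)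
    (Real.rpow_nonneg hr'0.le ν)
  have hpow : Rρ r' ^ p ≤ (C1 / C0) ^ p * (r' / r) ^ β * Rρ r ^ p :=
    calc Rρ r' ^ p ≤ (C1 * r' ^ ν) ^ p := Real.rpow_le_rpow hR'.le (hbounds' r' hr').2 hp
      _ = (C1 / C0) ^ p * (r' / r) ^ (ν * p) * (C0 * r ^ ν) ^ p := by
        rw [Real.mul_rpow hC1.le (by positivity), Real.mul_rpow hC0.le (by positivity),
          Real.div_rpow hC1.le hC0.le, Real.div_rpow hr'0.le hr0.le, Real.rpow_mul hr'0.le,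
          Real.rpow_mul hr0.le]
        field_simp
      _ ≤ (C1 / C0) ^ p * (r' / r) ^ β * Rρ r ^ p := by
        gcongr
        · exact (one_le_div hr0).2 hrr'
        · exact (hbounds' r hr).1
  calc ρ (Rρ r') * Rρ r' ^ p ≤ ρ (Rρ r) * ((C1 / C0) ^ p * (r' / r) ^ β * Rρ r ^ p) :=
        mul_le_mul (hρ (mem_Ici.2 hR.le) (mem_Ici.2 hR'.le) hRR') hpow
          (Real.rpow_nonneg hR'.le p) (hρ0 _ hR.le).le
    _ = (C1 / C0) ^ p * (r' / r) ^ β * (ρ (Rρ r) * Rρ r ^ p) := by ring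

/-- With `x = R'/R`: the `α2`-bound and the growth of `v` give `c x ^ (p-α2) ≤ ρ' v' / (ρ v)`,
the `α1`-bound gives `ρ' R' ^ p ≤ x ^ (p-α1) ρ R ^ p`, and `p - α1 = (p - α2) β`. -/
theorem mul_rpow_le_of_volume_ratio {ρ ρ' v v' c p α1 α2 R R' : ℝ} (hα12 : α1 < α2)
    (hα2p : α2 < p) (hc : 0 < c) (hR : 0 < R) (hRR' : R ≤ R') (hρ : 0 < ρ) (hv : 0 < v)
    (hv' : 0 ≤ v') (hdec : ρ' * R' ^ α1 ≤ ρ * R ^ α1) (hinc : ρ * R ^ α2 ≤ ρ' * R' ^ α2)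
    (hgrowth : c * (v * R ^ (-p)) ≤ v' * R' ^ (-p)) :
    ρ' * R' ^ p ≤ (c⁻¹ * (ρ' * v' / (ρ * v))) ^ ((p - α1) / (p - α2)) * (ρ * R ^ p) := by
  have hR' : 0 < R' := hR.trans_le hRR'
  have hx : 0 ≤ R' / R := div_nonneg hR'.le hR.le
  have hratio : (R' / R) ^ (p - α2) ≤ c⁻¹ * (ρ' * v' / (ρ * v)) := by
    have hp' := Real.rpow_pos_of_pos hR' p
    have hp := Real.rpow_pos_of_pos hR p
    have hα2 := Real.rpow_pos_of_pos hR α2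
    rw [Real.rpow_neg hR.le, Real.rpow_neg hR'.le, ← div_eq_mul_inv, ← div_eq_mul_inv,
      mul_div_assoc', div_le_div_iff₀ hp hp'] at hgrowth
    have key := mul_le_mul hgrowth hinc (mul_nonneg hρ.le hα2.le) (mul_nonneg hv' hp.le)
    rw [Real.div_rpow hR'.le hR.le, Real.rpow_sub hR', Real.rpow_sub hR,
      div_le_iff₀ (div_pos hp hα2)]
    field_simp
    nlinarith [key]
  have hpow : (R' / R) ^ (p - α1) ≤ (c⁻¹ * (ρ' * v' / (ρ * v))) ^ ((p - α1) / (p - α2)) := by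
    conv_lhs => rw [show p - α1 = (p - α2) * ((p - α1) / (p - α2)) by
      field_simp [(sub_pos.2 hα2p).ne'], Real.rpow_mul hx]
    exact Real.rpow_le_rpow (Real.rpow_nonneg hx _) hratio
      (div_pos (sub_pos.2 (hα12.trans hα2p)) (sub_pos.2 hα2p)).le
  calc ρ' * R' ^ p = ρ' * R' ^ α1 * R' ^ (p - α1) := by
        rw [mul_assoc, ← Real.rpow_add hR', add_sub_cancel]
    _ ≤ ρ * R ^ α1 * R' ^ (p - α1) :=
        mul_le_mul_of_nonneg_right hdec (Real.rpow_nonneg hR'.le _)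
    _ = (R' / R) ^ (p - α1) * (ρ * R ^ p) := by
        rw [Real.div_rpow hR'.le hR.le, Real.rpow_sub hR]
        field_simp
    _ ≤ _ := mul_le_mul_of_nonneg_right hpow (mul_nonneg hρ.le (Real.rpow_nonneg hR.le p))

theorem upperScalingOn_Ici_of_volume_growth {ρ V Rρ : ℝ → ℝ} {c p α1 α2 r₀ : ℝ}
    (hα12 : α1 < α2) (hα2p : α2 < p) (hc : 0 < c) (hρ : ∀ R, 0 ≤ R → 0 < ρ R)
    (hV : ∀ R, 0 < R → 0 < V R) (hRρ : MonotoneOn Rρ (Ici 0)) (hr₀ : 0 ≤ r₀) (hr₀1 : 1 ≤ Rρ r₀)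
    (hvol : ∀ r, 0 ≤ r → ρ (Rρ r) * V (Rρ r) = r)
    (hdec : AntitoneOn (fun s => ρ s * s ^ α1) (Ici 1))
    (hinc : MonotoneOn (fun s => ρ s * s ^ α2) (Ici 1))
    (hgrowth : ∀ R R', 0 < R → R ≤ R' → c * (V R * R ^ (-p)) ≤ V R' * R' ^ (-p)) :
    UpperScalingOn (fun r => ρ (Rρ r) * Rρ r ^ p) (c⁻¹ ^ ((p - α1) / (p - α2)))
      ((p - α1) / (p - α2)) (Ici r₀) := by
  intro r hr r' hr' hrr'
  have hr0 : 0 ≤ r := hr₀.trans hr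
  have hR1 : 1 ≤ Rρ r := hr₀1.trans (hRρ hr₀ hr0 hr)
  have hRR' : Rρ r ≤ Rρ r' := hRρ hr0 (hr0.trans hrr') hrr'
  have hR : 0 < Rρ r := one_pos.trans_le hR1
  have h := mul_rpow_le_of_volume_ratio hα12 hα2p hc hR hRR' (hρ _ hR.le) (hV _ hR)
    (hV _ (hR.trans_le hRR')).le (hdec hR1 (hR1.trans hRR') hRR')
    (hinc hR1 (hR1.trans hRR') hRR') (hgrowth _ _ hR hRR')
  rwa [hvol r hr0, hvol r' (hr0.trans hrr'),
    Real.mul_rpow (inv_nonneg.2 hc.le) (div_nonneg (hr0.trans hrr') hr0)] at h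

theorem W_scaling_upper_bound_general
    (N : ℕ) (p α1 α2 c : ℝ)
    (hα1 : 0 < α1) (hα12 : α1 < α2) (hα2p : α2 < p) (hpN : p < N)
    (hc0 : 0 < c) (hc1 : c < 1)
    (V Vinv : ℝ → ℝ)
    (hV_mono : StrictMonoOn V (Set.Ici 0))
    (hV0 : V 0 = 0)
    (hVinv_left : ∀ x : ℝ, 0 ≤ x → Vinv (V x) = x)
    (hVinv_right : ∀ y : ℝ, 0 ≤ y → 0 ≤ Vinv y ∧ V (Vinv y) = y)
    (h_phyp : ∀ k : ℝ, 0 < k →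
      (∫ t in (0:ℝ)..k, Vinv t ^ (-p)) ≤ c⁻¹ * k * Vinv k ^ (-p))
    (ρ : ℝ → ℝ)
    (hρ_pos : ∀ s : ℝ, 0 ≤ s → 0 < ρ s)
    (hρ_cont : ContinuousOn ρ (Set.Ici 0))
    (hρ_anti : AntitoneOn ρ (Set.Ici 0))
    (hρ_dec : AntitoneOn (fun s : ℝ => ρ s * s ^ α1) (Set.Ioi 1))
    (hρ_inc : MonotoneOn (fun s : ℝ => ρ s * s ^ α2) (Set.Ioi 1))
    (Rρ : ℝ → ℝ)
    (hvol_mono : StrictMonoOn (fun R : ℝ => ρ R * V R) (Set.Ici 0))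
    (hRρ_left : ∀ R : ℝ, 0 ≤ R → Rρ (ρ R * V R) = R)
    (hRρ_right : ∀ y : ℝ, 0 ≤ y → 0 ≤ Rρ y ∧ ρ (Rρ y) * V (Rρ y) = y)
    (C0 C1 : ℝ) (hC0 : 0 < C0) (hC01 : C0 < C1)
    (hRρ_small : ∀ s : ℝ, 0 < s → Rρ s ≤ 1 →
      C0 * s ^ ((N : ℝ)⁻¹) ≤ Rρ s ∧ Rρ s ≤ C1 * s ^ ((N : ℝ)⁻¹)) :
    0 < (p - α1) / (p - α2) - (p - α2) / ((N : ℝ) - α1) ∧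
    ∃ γ1 : ℝ, 0 < γ1 ∧
      ∀ lam r : ℝ, 1 ≤ lam → 0 < r →
        ρ (Rρ (lam * r)) * Rρ (lam * r) ^ p *
            (lam * r) ^ (-((p - α2) / ((N : ℝ) - α1))) ≤
          γ1 * lam ^ ((p - α1) / (p - α2) - (p - α2) / ((N : ℝ) - α1)) *
            (ρ (Rρ r) * Rρ r ^ p * r ^ (-((p - α2) / ((N : ℝ) - α1)))) := by
  have hp : 0 < p := by linarith
  have hpN' : (N : ℝ)⁻¹ * p < 1 := by rw [inv_mul_eq_div, div_lt_one (by linarith)]; exact hpN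
  have hβ : 1 < (p - α1) / (p - α2) := (one_lt_div (by linarith)).2 (by linarith)
  have he : (p - α2) / ((N : ℝ) - α1) < 1 := (div_lt_one (by linarith)).2 (by linarith)
  refine ⟨by linarith, ?_⟩
  have hρ1 := hρ_pos 1 zero_le_one
  have hV_pos : ∀ R, 0 < R → 0 < V R := fun R hR =>
    hV0 ▸ hV_mono (mem_Ici.2 le_rfl) (mem_Ici.2 hR.le) hR
  have hV1 := hV_pos 1 one_pos
  have hVinv_mono : MonotoneOn Vinv (Ici 0) := hV_mono.monotoneOn_of_rightInvOn
    (fun y hy => (hVinv_right y hy).1) (fun y hy => (hVinv_right y hy).2)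
  have hRρ_mono : MonotoneOn Rρ (Ici 0) := hvol_mono.monotoneOn_of_rightInvOn
    (fun y hy => (hRρ_right y hy).1) (fun y hy => (hRρ_right y hy).2)
  have hVinv_low : ∀ t ∈ Ioc 0 (V 1), C0 * ρ 1 ^ (N : ℝ)⁻¹ * t ^ (N : ℝ)⁻¹ ≤ Vinv t :=
    fun t ht => mul_rpow_le_of_radius_lower_bound hC0.le (by positivity) hρ_anti hρ_pos
      hVinv_mono hVinv_right (hVinv_left 1 zero_le_one) hRρ_left
      (fun s hs hs1 => (hRρ_small s hs hs1).1) ht.1 ht.2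
  have hgrowth : ∀ R R', 0 < R → R ≤ R' → c * (V R * R ^ (-p)) ≤ V R' * R' ^ (-p) :=
    fun R R' => mul_rpow_neg_le_of_nonparabolic hc0 hp.le (by positivity) hV1
      hpN' (hV_mono.monotoneOn.mono Ioi_subset_Ici_self) hV_pos
      (hVinv_mono.mono Ioi_subset_Ici_self) (fun R hR => hVinv_left R (le_of_lt hR))
      hVinv_low h_phyp
  have hr₀ : Rρ (ρ 1 * V 1) = 1 := hRρ_left 1 zero_le_one
  have hsmall := upperScalingOn_Ioc_of_rpow_bounds hC0 hp.le (hpN'.le.trans hβ.le) hρ_anti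
    hρ_pos hRρ_mono hr₀.le hRρ_small
  have hlarge := upperScalingOn_Ici_of_volume_growth hα12 hα2p hc0 hρ_pos hV_pos hRρ_mono
    (mul_pos hρ1 hV1).le hr₀.ge (fun r hr => (hRρ_right r hr).2)
    (hρ_dec.Ici_of_continuousWithinAt (continuousWithinAt_mul_rpow_Ioi_one hρ_cont α1))
    (hρ_inc.Ici_of_continuousWithinAt (continuousWithinAt_mul_rpow_Ioi_one hρ_cont α2)) hgrowth
  have hA : 1 ≤ (C1 / C0) ^ p := Real.one_le_rpow ((one_le_div hC0).2 hC01.le) hp.le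
  have hB : 1 ≤ c⁻¹ ^ ((p - α1) / (p - α2)) :=
    Real.one_le_rpow ((one_le_inv₀ hc0).2 hc1.le) (by linarith)
  have hW := (hsmall.union hlarge hA hB (mul_pos hρ1 hV1) fun r hr =>
    mul_nonneg (hρ_pos _ (hRρ_right r (le_of_lt hr)).1).le
      (Real.rpow_nonneg (hRρ_right r (le_of_lt hr)).1 p)).mul_rpow (fun _ h => h)
    (-((p - α2) / ((N : ℝ) - α1)))
  refine ⟨_, mul_pos (one_pos.trans_le hB) (one_pos.trans_le hA), fun lam r hlam hr => ?_⟩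
  have := hW hr (mul_pos (one_pos.trans_le hlam) hr) (le_mul_of_one_le_left hr.le hlam)
  rwa [mul_div_cancel_right₀ _ hr.ne', ← sub_eq_add_neg] at this

/-- Under the same hypotheses as Statement 11, with
`W r = ρ (Rρ r) * Rρ r ^ p * r ^ (-(p-α2)/(N-α1))` and
`d = (p-α1)/(p-α2) - (p-α2)/(N-α1)`, one has `d > 0` and there is `γ1 > 0` with
`W (λ r) ≤ γ1 * λ ^ d * W r` for all `λ ≥ 1` and `r > 0`. -/
theorem W_scaling_upper_bound
    (N : ℕ) (hN : 2 ≤ N) (p α1 α2 c : ℝ)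
    (hα1 : 0 < α1) (hα12 : α1 < α2) (hα2p : α2 < p) (hpN : p < N)
    (hc0 : 0 < c) (hc1 : c < 1)
    (V V' Vinv : ℝ → ℝ)
    (hV_deriv : ∀ R : ℝ, 0 ≤ R → HasDerivAt V (V' R) R)
    (hV'_cont : ContinuousOn V' (Set.Ici 0))
    (hV_mono : StrictMonoOn V (Set.Ici 0))
    (hV0 : V 0 = 0)
    (hV_surj : ∀ y : ℝ, 0 ≤ y → ∃ x : ℝ, 0 ≤ x ∧ V x = y)
    (hVinv_left : ∀ x : ℝ, 0 ≤ x → Vinv (V x) = x)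
    (hVinv_right : ∀ y : ℝ, 0 ≤ y → 0 ≤ Vinv y ∧ V (Vinv y) = y)
    (h_phyp : ∀ k : ℝ, 0 < k →
      (∫ t in (0:ℝ)..k, Vinv t ^ (-p)) ≤ c⁻¹ * k * Vinv k ^ (-p))
    (hV'_ub : ∀ R : ℝ, 0 < R → V' R ≤ (N : ℝ) * V R / R)
    (ρ : ℝ → ℝ)
    (hρ_pos : ∀ s : ℝ, 0 ≤ s → 0 < ρ s)
    (hρ_cont : ContinuousOn ρ (Set.Ici 0))
    (hρ_anti : AntitoneOn ρ (Set.Ici 0))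
    (hρ_dec : AntitoneOn (fun s : ℝ => ρ s * s ^ α1) (Set.Ioi 1))
    (hρ_inc : MonotoneOn (fun s : ℝ => ρ s * s ^ α2) (Set.Ioi 1))
    (Rρ : ℝ → ℝ)
    (hvol_mono : StrictMonoOn (fun R : ℝ => ρ R * V R) (Set.Ici 0))
    (hvol_surj : ∀ y : ℝ, 0 ≤ y → ∃ R : ℝ, 0 ≤ R ∧ ρ R * V R = y)
    (hRρ_left : ∀ R : ℝ, 0 ≤ R → Rρ (ρ R * V R) = R)
    (hRρ_right : ∀ y : ℝ, 0 ≤ y → 0 ≤ Rρ y ∧ ρ (Rρ y) * V (Rρ y) = y)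
    (C0 C1 : ℝ) (hC0 : 0 < C0) (hC01 : C0 < C1)
    (hRρ_small : ∀ s : ℝ, 0 < s → Rρ s ≤ 1 →
      C0 * s ^ ((N : ℝ)⁻¹) ≤ Rρ s ∧ Rρ s ≤ C1 * s ^ ((N : ℝ)⁻¹)) :
    0 < (p - α1) / (p - α2) - (p - α2) / ((N : ℝ) - α1) ∧
    ∃ γ1 : ℝ, 0 < γ1 ∧
      ∀ lam r : ℝ, 1 ≤ lam → 0 < r →
        ρ (Rρ (lam * r)) * Rρ (lam * r) ^ p *
            (lam * r) ^ (-((p - α2) / ((N : ℝ) - α1))) ≤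
          γ1 * lam ^ ((p - α1) / (p - α2) - (p - α2) / ((N : ℝ) - α1)) *
            (ρ (Rρ r) * Rρ r ^ p * r ^ (-((p - α2) / ((N : ℝ) - α1)))) :=
  W_scaling_upper_bound_general N p α1 α2 c hα1 hα12 hα2p hpN hc0 hc1 V Vinv hV_mono hV0 hVinv_left
    hVinv_right h_phyp ρ hρ_pos hρ_cont hρ_anti hρ_dec hρ_inc Rρ hvol_mono hRρ_left hRρ_right C0 C1
    hC0 hC01 hRρ_small
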